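/- Auxiliary Markov chain in the converse: Let (X_i, Y_i), i = 1,…,n, be i.i.d. pairs of finite-valued random variables, let K = Φ(X^n) for a function Φ, let J be uniformly distributed on {1,…,n} and independent of (X^n, Y^n), and set U = (K, X₁,…,X_{J−1}, Y_{J+1},…,Y_n, J). Then U–X_J–Y_J is a Markov chain, i.e., U and Y_J are conditionally independent given X_J. -/

import Mathlib

open scoped BigOperators Classical

noncomputable section

namespace CRGen

/-- A probability mass function on a finite type. -/
def IsPMF {α : Type*} [Fintype α] (p : α → ℝ) : Prop :=
  (∀ a, 0 ≤ p a) ∧ ∑ a, p a = 1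

/-- Shannon entropy to base 2 of a pmf on a finite type (`0 log 0 = 0`). -/
def entPMF {α : Type*} [Fintype α] (p : α → ℝ) : ℝ :=
  - ∑ a, p a * Real.logb 2 (p a)

/-- Distribution (pushforward pmf) of a random variable on a finite probability
space with pmf `μ`. -/
def dist {Ω α : Type*} [Fintype Ω] (μ : Ω → ℝ) (X : Ω → α) : α → ℝ :=
  fun a => ∑ ω, if X ω = a then μ ω else 0

/-- Shannon entropy (base 2) of a random variable. -/
def H {Ω α : Type*} [Fintype Ω] [Fintype α] (μ : Ω → ℝ) (X : Ω → α) : ℝ :=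
  entPMF (dist μ X)

/-- Conditional entropy `H(X|Y)`. -/
def condH {Ω α β : Type*} [Fintype Ω] [Fintype α] [Fintype β]
    (μ : Ω → ℝ) (X : Ω → α) (Y : Ω → β) : ℝ :=
  H μ (fun ω => (X ω, Y ω)) - H μ Y

/-- Mutual information `I(X;Y)`. -/
def MI {Ω α β : Type*} [Fintype Ω] [Fintype α] [Fintype β]
    (μ : Ω → ℝ) (X : Ω → α) (Y : Ω → β) : ℝ :=
  H μ X + H μ Y - H μ (fun ω => (X ω, Y ω))

/-- Conditional mutual information `I(X;Y|Z)`. -/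
def condMI {Ω α β γ : Type*} [Fintype Ω] [Fintype α] [Fintype β] [Fintype γ]
    (μ : Ω → ℝ) (X : Ω → α) (Y : Ω → β) (Z : Ω → γ) : ℝ :=
  H μ (fun ω => (X ω, Z ω)) + H μ (fun ω => (Y ω, Z ω))
    - H μ (fun ω => (X ω, (Y ω, Z ω))) - H μ Z

/-- First marginal of a joint pmf on a product. -/
def margFst {α β : Type*} [Fintype α] [Fintype β] (q : α × β → ℝ) : α → ℝ :=
  fun a => ∑ b, q (a, b)

/-- Second marginal of a joint pmf on a product. -/
def margSnd {α β : Type*} [Fintype α] [Fintype β] (q : α × β → ℝ) : β → ℝ :=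
  fun b => ∑ a, q (a, b)

/-- Mutual information of a joint pmf on a product. -/
def miPMF {α β : Type*} [Fintype α] [Fintype β] (q : α × β → ℝ) : ℝ :=
  entPMF (margFst q) + entPMF (margSnd q) - entPMF q

/-- The (variable-length) prefix `x₁,…,x_{j−1}` of a vector, encoded as a masked
vector: entries at positions `≥ j` are replaced by `none`. -/
def maskPre {𝒳 : Type} {n : ℕ} (xv : Fin n → 𝒳) (j : Fin n) : Fin n → Option 𝒳 :=
  fun i => if (i : ℕ) < (j : ℕ) then some (xv i) else none

/-- The (variable-length) suffix `y_{j+1},…,y_n` of a vector, encoded as a masked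
vector: entries at positions `≤ j` are replaced by `none`. -/
def maskSuf {𝒴 : Type} {n : ℕ} (yv : Fin n → 𝒴) (j : Fin n) : Fin n → Option 𝒴 :=
  fun i => if (j : ℕ) < (i : ℕ) then some (yv i) else none

/-!
Conditionally on `J = j`, the pair `(X_j, Y_j)` is independent of the remaining coordinates, and
`U` sees `Y` only through the coordinates other than `j`. Hence
`P[U = u, X_J = x, Y_J = y] = g(u, x) · Q(x, y)`, and any such factorization of a joint law
makes `U – X_J – Y_J` a Markov chain.
-/

open Function

section Pushforward

variable {Ω α β γ : Type*} [Fintype Ω] (μ : Ω → ℝ)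

lemma dist_comp [Fintype α] (Z : Ω → α) (f : α → β) (b : β) :
    dist μ (fun ω => f (Z ω)) b = ∑ a, if f a = b then dist μ Z a else 0 := by
  simp only [dist]
  rw [← Finset.sum_fiberwise Finset.univ Z]
  refine Finset.sum_congr rfl fun a _ => ?_
  split_ifs with h <;> simp +contextual [Finset.sum_filter, h]

lemma dist_eq_sum_dist_prod_right [Fintype β] (A : Ω → α) (B : Ω → β) (a : α) :
    dist μ A a = ∑ b, dist μ (fun ω => (A ω, B ω)) (a, b) := by
  simp only [dist]
  rw [Finset.sum_comm]
  simp [Prod.ext_iff, ite_and]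

lemma dist_eq_sum_dist_prod_left [Fintype α] (A : Ω → α) (B : Ω → β) (b : β) :
    dist μ B b = ∑ a, dist μ (fun ω => (A ω, B ω)) (a, b) := by
  simp only [dist]
  rw [Finset.sum_comm]
  simp [Prod.ext_iff, ite_and]

lemma dist_prod_assoc (A : Ω → α) (B : Ω → β) (C : Ω → γ) (a : α) (b : β) (c : γ) :
    dist μ (fun ω => ((A ω, B ω), C ω)) ((a, b), c)
      = dist μ (fun ω => (A ω, B ω, C ω)) (a, b, c) := by
  simp [dist, and_assoc]

end Pushforward

lemma dist_markov_of_factorization {Ω α β γ : Type*} [Fintype Ω] [Fintype α] [Fintype γ]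
    (μ : Ω → ℝ) (U : Ω → α) (X : Ω → β) (Y : Ω → γ) (g : α → β → ℝ) (q : β → γ → ℝ)
    (hfac : ∀ u x y, dist μ (fun ω => (U ω, X ω, Y ω)) (u, x, y) = g u x * q x y)
    (u : α) (x : β) (y : γ) :
    dist μ (fun ω => (U ω, X ω, Y ω)) (u, x, y) * dist μ X x
      = dist μ (fun ω => (U ω, X ω)) (u, x) * dist μ (fun ω => (X ω, Y ω)) (x, y) := by
  have hUX : ∀ u, dist μ (fun ω => (U ω, X ω)) (u, x) = g u x * ∑ y, q x y := fun u => by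
    simp only [dist_eq_sum_dist_prod_right μ (fun ω => (U ω, X ω)) Y (u, x), dist_prod_assoc, hfac,
      Finset.mul_sum]
  have hXY : dist μ (fun ω => (X ω, Y ω)) (x, y) = (∑ u, g u x) * q x y := by
    rw [dist_eq_sum_dist_prod_left μ U _ (x, y), Finset.sum_mul]
    simp only [hfac]
  have hX : dist μ X x = (∑ u, g u x) * ∑ y, q x y := by
    rw [dist_eq_sum_dist_prod_left μ U X x, Finset.sum_mul]
    simp only [hUX]
  rw [hfac, hUX, hXY, hX]
  ring

section Coordinate

variable {ι σ τ : Type*} [Fintype ι] [DecidableEq ι] [Fintype σ] [Fintype τ]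

lemma sum_ite_apply_eq_of_update_invariant {M : Type*} [AddCommMonoid M] (j : ι)
    (G : (ι → τ) → M) (hG : ∀ f c, G (update f j c) = G f) (c c' : τ) :
    ∑ f : ι → τ, (if f j = c then G f else 0) = ∑ f : ι → τ, (if f j = c' then G f else 0) := by
  let e : (ι → τ) ≃ (ι → τ) :=
    Equiv.piCongrRight fun i => if i = j then Equiv.swap c c' else Equiv.refl τ
  have he : ∀ f, e f = update f j (Equiv.swap c c' (f j)) := fun f => by
    ext i
    by_cases hi : i = j
    · subst hi; simp [e]
    · simp [e, hi]
  refine Fintype.sum_equiv e _ _ fun f => ?_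
  rw [he, hG, update_self, Equiv.swap_apply_eq_iff, Equiv.swap_apply_right]

lemma sum_ite_prod_eq_mul_sum_ite_prod_erase (Q : σ × τ → ℝ) (j : ι)
    (F : (ι → σ) → (ι → τ) → Prop) (hF : ∀ xv yv c, F xv (update yv j c) ↔ F xv yv)
    (x : σ) (y y₀ : τ) :
    ∑ xv, ∑ yv, (if F xv yv ∧ xv j = x ∧ yv j = y then ∏ i, Q (xv i, yv i) else 0)
      = Q (x, y) * ∑ xv, ∑ yv, (if F xv yv ∧ xv j = x ∧ yv j = y₀
          then ∏ i ∈ Finset.univ.erase j, Q (xv i, yv i) else 0) := by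
  let G : (ι → σ) → (ι → τ) → ℝ := fun xv yv =>
    if F xv yv ∧ xv j = x then ∏ i ∈ Finset.univ.erase j, Q (xv i, yv i) else 0
  have hG : ∀ xv yv c, G xv (update yv j c) = G xv yv := fun xv yv c => by
    have hprod : ∏ i ∈ Finset.univ.erase j, Q (xv i, update yv j c i)
        = ∏ i ∈ Finset.univ.erase j, Q (xv i, yv i) :=
      Finset.prod_congr rfl fun i hi => by rw [update_of_ne (Finset.ne_of_mem_erase hi)]
    simp only [G, hF, hprod]
  have hsplit : ∀ xv yv c, (if F xv yv ∧ xv j = x ∧ yv j = c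
      then ∏ i ∈ Finset.univ.erase j, Q (xv i, yv i) else 0)
        = if yv j = c then G xv yv else 0 := fun xv yv c => by
    by_cases h : yv j = c <;> simp [G, h]
  calc ∑ xv, ∑ yv, (if F xv yv ∧ xv j = x ∧ yv j = y then ∏ i, Q (xv i, yv i) else 0)
      = Q (x, y) * ∑ xv, ∑ yv, (if F xv yv ∧ xv j = x ∧ yv j = y
          then ∏ i ∈ Finset.univ.erase j, Q (xv i, yv i) else 0) := by
        simp only [Finset.mul_sum, mul_ite, mul_zero]
        refine Finset.sum_congr rfl fun xv _ => Finset.sum_congr rfl fun yv _ => ?_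
        split_ifs with h
        · rw [← Finset.mul_prod_erase _ _ (Finset.mem_univ j), h.2.1, h.2.2]
        · rfl
    _ = _ := by
        simp only [hsplit, sum_ite_apply_eq_of_update_invariant j _ (hG _) y y₀]

end Coordinate

section SelectedCoordinate

variable {Ω α ι σ τ : Type*} [Fintype Ω] [Fintype ι] [DecidableEq ι] [Fintype σ] [Fintype τ]
  (μ : Ω → ℝ) (J : Ω → ι) (X : Ω → ι → σ) (Y : Ω → ι → τ) (π : ι → ℝ) (Q : σ × τ → ℝ)

lemma dist_selected_eq_sum
    (hlaw : ∀ j xv yv, dist μ (fun ω => (J ω, X ω, Y ω)) (j, xv, yv) = π j * ∏ i, Q (xv i, yv i))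
    (V : ι → (ι → σ) → (ι → τ) → α) (u : α) (x : σ) (y : τ) :
    dist μ (fun ω => (V (J ω) (X ω) (Y ω), X ω (J ω), Y ω (J ω))) (u, x, y)
      = ∑ j, π j * ∑ xv, ∑ yv,
          if V j xv yv = u ∧ xv j = x ∧ yv j = y then ∏ i, Q (xv i, yv i) else 0 := by
  refine (dist_comp μ (fun ω => (J ω, X ω, Y ω))
    (fun t => (V t.1 t.2.1 t.2.2, t.2.1 t.1, t.2.2 t.1)) (u, x, y)).trans ?_
  simp only [Fintype.sum_prod_type, hlaw, Prod.mk.injEq, Finset.mul_sum, mul_ite, mul_zero]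

lemma dist_markov_selected [Fintype α]
    (hlaw : ∀ j xv yv, dist μ (fun ω => (J ω, X ω, Y ω)) (j, xv, yv) = π j * ∏ i, Q (xv i, yv i))
    (V : ι → (ι → σ) → (ι → τ) → α) (hV : ∀ j xv yv c, V j xv (update yv j c) = V j xv yv)
    (u : α) (x : σ) (y : τ) :
    dist μ (fun ω => (V (J ω) (X ω) (Y ω), X ω (J ω), Y ω (J ω))) (u, x, y)
        * dist μ (fun ω => X ω (J ω)) x
      = dist μ (fun ω => (V (J ω) (X ω) (Y ω), X ω (J ω))) (u, x)
        * dist μ (fun ω => (X ω (J ω), Y ω (J ω))) (x, y) := by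
  refine dist_markov_of_factorization μ _ _ _
    -- the weight of the other coordinates does not depend on the `y` used here
    (fun u x => ∑ j, π j * ∑ xv, ∑ yv, if V j xv yv = u ∧ xv j = x ∧ yv j = y
      then ∏ i ∈ Finset.univ.erase j, Q (xv i, yv i) else 0)
    (fun x y => Q (x, y)) (fun u x y' => ?_) u x y
  rw [dist_selected_eq_sum μ J X Y π Q hlaw V, Finset.sum_mul]
  refine Finset.sum_congr rfl fun j _ => ?_
  rw [sum_ite_prod_eq_mul_sum_ite_prod_erase Q j (fun xv yv => V j xv yv = u)
    (fun xv yv c => by rw [hV]) x y' y]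
  ring

end SelectedCoordinate

lemma maskSuf_update {𝒴 : Type} {n : ℕ} (yv : Fin n → 𝒴) (j : Fin n) (c : 𝒴) :
    maskSuf (update yv j c) j = maskSuf yv j := by
  ext i
  by_cases h : (j : ℕ) < i
  · simp [maskSuf, h, update_of_ne (Fin.ne_of_gt h)]
  · simp [maskSuf, h]

theorem auxiliary_markov_chain_general
    {Ω 𝒳 𝒴 𝒦 : Type} [Fintype Ω] [Fintype 𝒳] [Fintype 𝒴] [Fintype 𝒦]
    (μ : Ω → ℝ) {n : ℕ}
    (Q : 𝒳 × 𝒴 → ℝ)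
    (X : Ω → Fin n → 𝒳) (Y : Ω → Fin n → 𝒴)
    (hiid : ∀ (xv : Fin n → 𝒳) (yv : Fin n → 𝒴),
      dist μ (fun ω => (X ω, Y ω)) (xv, yv) = ∏ i, Q (xv i, yv i))
    (Φ : (Fin n → 𝒳) → 𝒦) (J : Ω → Fin n)
    (hJ : ∀ (j : Fin n) (t : (Fin n → 𝒳) × (Fin n → 𝒴)),
      dist μ (fun ω => (J ω, X ω, Y ω)) (j, t)
        = (1 / (n : ℝ)) * dist μ (fun ω => (X ω, Y ω)) t) :
    ∀ (u : 𝒦 × (Fin n → Option 𝒳) × (Fin n → Option 𝒴) × Fin n) (x : 𝒳) (y : 𝒴),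
      dist μ (fun ω =>
          ((Φ (X ω), maskPre (X ω) (J ω), maskSuf (Y ω) (J ω), J ω),
            X ω (J ω), Y ω (J ω))) (u, x, y)
        * dist μ (fun ω => X ω (J ω)) x
      = dist μ (fun ω =>
          ((Φ (X ω), maskPre (X ω) (J ω), maskSuf (Y ω) (J ω), J ω),
            X ω (J ω))) (u, x)
        * dist μ (fun ω => (X ω (J ω), Y ω (J ω))) (x, y) :=
  dist_markov_selected μ J X Y (fun _ => 1 / (n : ℝ)) Q
    (fun j xv yv => by rw [hJ, hiid]) (fun j xv yv => (Φ xv, maskPre xv j, maskSuf yv j, j))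
    (fun j xv yv c => by rw [maskSuf_update])

/-- Auxiliary Markov chain in the converse: with i.i.d. pairs `(X_i, Y_i) ∼ Q`,
`K = Φ(X^n)`, `J` uniform on `{1,…,n}` independent of `(X^n, Y^n)`, and
`U = (K, X^{J−1}, Y_{J+1}^n, J)`, the chain `U – X_J – Y_J` is Markov, i.e. `U`
and `Y_J` are conditionally independent given `X_J`:
`P[U=u, X_J=x, Y_J=y]·P[X_J=x] = P[U=u, X_J=x]·P[X_J=x, Y_J=y]` for all `u,x,y`. -/
theorem auxiliary_markov_chain
    {Ω 𝒳 𝒴 𝒦 : Type} [Fintype Ω] [Fintype 𝒳] [Fintype 𝒴] [Fintype 𝒦]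
    (μ : Ω → ℝ) (hμ : IsPMF μ) {n : ℕ}
    (Q : 𝒳 × 𝒴 → ℝ) (hQ : IsPMF Q)
    (X : Ω → Fin n → 𝒳) (Y : Ω → Fin n → 𝒴)
    (hiid : ∀ (xv : Fin n → 𝒳) (yv : Fin n → 𝒴),
      dist μ (fun ω => (X ω, Y ω)) (xv, yv) = ∏ i, Q (xv i, yv i))
    (Φ : (Fin n → 𝒳) → 𝒦) (J : Ω → Fin n)
    (hJ : ∀ (j : Fin n) (t : (Fin n → 𝒳) × (Fin n → 𝒴)),
      dist μ (fun ω => (J ω, X ω, Y ω)) (j, t)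
        = (1 / (n : ℝ)) * dist μ (fun ω => (X ω, Y ω)) t) :
    ∀ (u : 𝒦 × (Fin n → Option 𝒳) × (Fin n → Option 𝒴) × Fin n) (x : 𝒳) (y : 𝒴),
      dist μ (fun ω =>
          ((Φ (X ω), maskPre (X ω) (J ω), maskSuf (Y ω) (J ω), J ω),
            X ω (J ω), Y ω (J ω))) (u, x, y)
        * dist μ (fun ω => X ω (J ω)) x
      = dist μ (fun ω =>
          ((Φ (X ω), maskPre (X ω) (J ω), maskSuf (Y ω) (J ω), J ω),
            X ω (J ω))) (u, x)
        * dist μ (fun ω => (X ω (J ω), Y ω (J ω))) (x, y) :=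
  auxiliary_markov_chain_general μ Q X Y hiid Φ J hJ

end CRGen
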